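/- arXiv:2408.04807 — 8 statements merged into one kernel-verified Lean document; each statement's English description precedes it below -/
import Mathlib

section
/- Let n be a positive natural number, let H be an n×n complex Hermitian matrix, and let Γ be an n×n diagonal matrix each of whose diagonal entries is 1 or −1, such that Γ·H = −H·Γ (H is chiral-symmetric). Suppose V is an n×n unitary matrix whose first column equals some standard basis vector e_m, and suppose T = V†·H·V is tridiagonal with every subdiagonal entry T_{i+1,i} nonzero. Then every diagonal entry of T is zero. -/
open Matrix Finset

/-- **Theorem 1 of the paper.** If `H` is an `n × n` Hermitian matrix that is
chiral-symmetric with respect to a diagonal sign matrix `Γ` (i.e. `Γ * H = -(H * Γ)`),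
`V` is unitary with first column equal to a standard basis vector `e m`, and
`T = Vᴴ * H * V` is tridiagonal with all subdiagonal entries nonzero, then all
diagonal entries of `T` vanish. -/
theorem onsite_potentials_zero_of_chiral
    (n : ℕ) (hn : 0 < n)
    (H Γ V T : Matrix (Fin n) (Fin n) ℂ)
    (hH : H.IsHermitian)
    (hΓdiag : ∀ i j : Fin n, i ≠ j → Γ i j = 0)
    (hΓsign : ∀ i : Fin n, Γ i i = 1 ∨ Γ i i = -1)
    (hchiral : Γ * H = -(H * Γ))
    (hV : Vᴴ * V = 1)
    (m : Fin n)
    (hVcol : ∀ i : Fin n, V i ⟨0, hn⟩ = if i = m then 1 else 0)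
    (hT : T = Vᴴ * H * V)
    (htridiag : ∀ i j : Fin n, ((i : ℕ) + 2 ≤ (j : ℕ) ∨ (j : ℕ) + 2 ≤ (i : ℕ)) → T i j = 0)
    (hsubdiag : ∀ i j : Fin n, (i : ℕ) = (j : ℕ) + 1 → T i j ≠ 0) :
    ∀ i : Fin n, T i i = 0 := by
  have hVV2 : V * Vᴴ = 1 := mul_eq_one_comm.mp hV
  set S : Matrix (Fin n) (Fin n) ℂ := (Vᴴ * Γ * V) with hSdef
  set γ : ℂ := Γ m m with hγdef
  set s : ℕ → ℂ := fun k => γ * (-1)^k with hsdef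
  have hγ : γ = 1 ∨ γ = -1 := hΓsign m
  have hγne : γ ≠ 0 := by rcases hγ with h | h <;> rw [h] <;> norm_num
  have hsne : ∀ k, s k ≠ 0 := by
    intro k
    simp only [hsdef]
    exact mul_ne_zero hγne (pow_ne_zero _ (by norm_num))
  have hssucc : ∀ k, s (k+1) = -(s k) := by
    intro k; simp only [hsdef]; ring
  have hsconj : ∀ k, star (s k) = s k := by
    intro k
    simp only [hsdef, star_mul', star_pow, star_neg, star_one]
    rcases hγ with h | h <;> rw [h] <;> simp
  have hΓH : Γᴴ = Γ := by
    ext i j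
    by_cases h : i = j
    · subst h
      rcases hΓsign i with h | h <;>
        simp [Matrix.conjTranspose_apply, h]
    · simp [Matrix.conjTranspose_apply, hΓdiag i j h, hΓdiag j i (Ne.symm h)]
  have hSH : Sᴴ = S := by
    rw [hSdef]
    simp only [Matrix.conjTranspose_mul, Matrix.conjTranspose_conjTranspose, hΓH,
      Matrix.mul_assoc]
  have hST : S * T = -(T * S) := by
    have h1 : S * T = Vᴴ * (Γ * H) * V := by
      rw [hT, hSdef]
      have : V * (Vᴴ * (H * V)) = H * V := by
        rw [← Matrix.mul_assoc, hVV2, Matrix.one_mul]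
      simp only [Matrix.mul_assoc, this]
    have h2 : T * S = Vᴴ * (H * Γ) * V := by
      rw [hT, hSdef]
      have : V * (Vᴴ * (Γ * V)) = Γ * V := by
        rw [← Matrix.mul_assoc, hVV2, Matrix.one_mul]
      simp only [Matrix.mul_assoc, this]
    rw [h1, h2, hchiral]
    simp only [Matrix.neg_mul, Matrix.mul_neg]
  have hcomm : ∀ i j : Fin n, (∑ l, S i l * T l j) = -(∑ l, T i l * S l j) := by
    intro i j
    have h := congrFun (congrFun hST i) j
    simpa [Matrix.mul_apply, Matrix.neg_apply] using h
  -- rows from columns via hermitianness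
  have hrow : ∀ (k : ℕ) (hk : k < n),
      (∀ i, S i ⟨k, hk⟩ = if i = ⟨k, hk⟩ then s k else 0) →
      ∀ j, S ⟨k, hk⟩ j = if (⟨k, hk⟩ : Fin n) = j then s k else 0 := by
    intro k hk hcol j
    have h1 : S j ⟨k, hk⟩ = star (S ⟨k, hk⟩ j) := by
      conv_lhs => rw [← hSH]
      rfl
    have h2 : star (S j ⟨k, hk⟩) = S ⟨k, hk⟩ j := by
      rw [h1, star_star]
    rw [hcol j] at h2
    rw [← h2, apply_ite star, star_zero, hsconj]
    by_cases h : j = ⟨k, hk⟩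
    · simp [h]
    · simp [h, Ne.symm h]
  -- diagonal entry vanishes once the column of S is known
  have hdiag0 : ∀ (k : ℕ) (hk : k < n),
      (∀ i, S i ⟨k, hk⟩ = if i = ⟨k, hk⟩ then s k else 0) →
      T ⟨k, hk⟩ ⟨k, hk⟩ = 0 := by
    intro k hk hcol
    have h := hcomm ⟨k, hk⟩ ⟨k, hk⟩
    simp only [hrow k hk hcol, hcol, ite_mul, mul_ite, zero_mul, mul_zero] at h
    rw [Finset.sum_ite_eq univ (⟨k, hk⟩ : Fin n), Finset.sum_ite_eq' univ (⟨k, hk⟩ : Fin n),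
      if_pos (mem_univ _), if_pos (mem_univ _)] at h
    -- h : s k * T a a = -(T a a * s k)
    have h2 : (2 : ℂ) * (s k * T ⟨k, hk⟩ ⟨k, hk⟩) = 0 := by linear_combination h
    have h0 : s k * T ⟨k, hk⟩ ⟨k, hk⟩ = 0 :=
      (mul_eq_zero.mp h2).resolve_left (by norm_num)
    exact (mul_eq_zero.mp h0).resolve_left (hsne k)
  have hnbr : ∀ (j i : Fin n), T j i ≠ 0 →
      (j : ℕ) + 1 = (i : ℕ) ∨ (j : ℕ) = (i : ℕ) ∨ (j : ℕ) = (i : ℕ) + 1 := by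
    intro j i hne
    by_contra hc
    push_neg at hc
    exact hne (htridiag j i (by omega))
  -- main induction : columns of S
  have key : ∀ (k : ℕ) (hk : k < n) (i : Fin n),
      S i ⟨k, hk⟩ = if i = ⟨k, hk⟩ then s k else 0 := by
    intro k
    induction k using Nat.strong_induction_on with
    | _ k IH =>
      match k with
      | 0 =>
        intro hk i
        have h0 : (⟨0, hk⟩ : Fin n) = ⟨0, hn⟩ := rfl
        rw [h0]
        have hVm : ∀ j : Fin n, star (V m j) = if j = ⟨0, hn⟩ then (1 : ℂ) else 0 := by
          intro j
          have h := congrFun (congrFun hV j) ⟨0, hn⟩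
          simp only [Matrix.mul_apply, Matrix.conjTranspose_apply, hVcol, Matrix.one_apply,
            mul_ite, mul_one, mul_zero] at h
          rwa [Finset.sum_ite_eq' univ m (fun l => star (V l j)), if_pos (mem_univ m)] at h
        have hval : S i ⟨0, hn⟩ = star (V m i) * γ := by
          rw [hSdef, Matrix.mul_apply]
          simp only [hVcol, mul_ite, mul_one, mul_zero]
          rw [Finset.sum_ite_eq' univ m, if_pos (mem_univ m), Matrix.mul_apply]
          rw [Finset.sum_eq_single m]
          · rw [Matrix.conjTranspose_apply, hγdef]
          · intro l _ hl
            rw [hΓdiag l m hl, mul_zero]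
          · intro h; exact absurd (mem_univ m) h
        rw [hval, hVm i]
        by_cases h : i = (⟨0, hn⟩ : Fin n) <;> simp [h, hsdef]
      | (k+1) =>
        intro hk i
        have hk' : k < n := by omega
        set a : Fin n := ⟨k, hk'⟩ with ha
        set b : Fin n := ⟨k+1, hk⟩ with hb
        have hcola : ∀ i, S i a = if i = a then s k else 0 := IH k (Nat.lt_succ_self k) hk'
        have hTaa : T a a = 0 := hdiag0 k hk' hcola
        have hTba : T b a ≠ 0 := hsubdiag b a rfl
        have h := hcomm i a
        have hrhs : (∑ l, T i l * S l a) = T i a * s k := by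
          simp only [hcola, mul_ite, mul_zero]
          rw [Finset.sum_ite_eq' univ a, if_pos (mem_univ a)]
        have hsplit : (∑ l, S i l * T l a)
            = S i b * T b a + ∑ l ∈ univ.erase b, S i l * T l a := by
          rw [← Finset.add_sum_erase _ _ (mem_univ b)]
        have herase : (∑ l ∈ univ.erase b, S i l * T l a)
            = if i = b then 0 else s (i : ℕ) * T i a := by
          have hterm : ∀ l ∈ univ.erase b, S i l * T l a
              = if i = l then s (l : ℕ) * T l a else 0 := by
            intro l hl
            have hlb : l ≠ b := (Finset.mem_erase.mp hl).1
            by_cases hle : (l : ℕ) ≤ k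
            · have hcl := IH (l : ℕ) (by omega) l.isLt i
              rw [Fin.eta] at hcl
              rw [hcl]
              by_cases h' : i = l <;> simp [h']
            · have hlk : (l : ℕ) ≠ k + 1 := fun h' => hlb (Fin.ext h')
              have hT0 : T l a = 0 := htridiag l a (Or.inr (by simp only [ha]; omega))
              simp [hT0]
          rw [Finset.sum_congr rfl hterm]
          rw [Finset.sum_ite_eq (univ.erase b) i (fun l => s (l : ℕ) * T l a)]
          by_cases h' : i = b
          · simp [h']
          · simp [Finset.mem_erase, h']
        rw [hsplit, herase, hrhs] at h
        by_cases hib : i = b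
        · rw [if_pos hib] at h ⊢
          rw [hib] at h
          rw [add_zero] at h
          have heq : S b b * T b a = s (k + 1) * T b a := by
            rw [h, hssucc]; ring
          rw [hib]
          exact mul_right_cancel₀ hTba heq
        · rw [if_neg hib] at h ⊢
          have hz : S i b * T b a = -(T i a * (s k + s (i : ℕ))) := by
            linear_combination h
          by_cases hTia : T i a = 0
          · rw [hTia] at hz
            simp only [zero_mul, mul_zero, neg_zero] at hz
            exact (mul_eq_zero.mp hz).resolve_right hTba
          · rcases hnbr i a hTia with h1 | h2 | h3
            · have hs0 : s k + s (i : ℕ) = 0 := by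
                have : k = (i : ℕ) + 1 := by simp only [ha] at h1; omega
                rw [this, hssucc]; ring
              rw [hs0] at hz
              simp only [mul_zero, neg_zero] at hz
              exact (mul_eq_zero.mp hz).resolve_right hTba
            · exfalso
              have : i = a := Fin.ext (by simp only [ha]; simpa using h2)
              rw [this, hTaa] at hTia
              exact hTia rfl
            · exfalso
              apply hib
              apply Fin.ext
              simp only [hb]
              simp only [ha] at h3
              omega
  intro i
  have h := hdiag0 (i : ℕ) i.isLt (fun j => by
    have := key (i : ℕ) i.isLt j
    rwa [Fin.eta] at this)
  rwa [Fin.eta] at h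
end

section
/- Let H be an n×n complex Hermitian matrix and let π be a permutation of the index set fixing the first index, with permutation matrix P (so that P†·H·P is the matrix obtained from H by simultaneously permuting rows and columns according to π). Suppose V₁ and V₂ are n×n unitary matrices whose first columns both equal the first standard basis vector e₁, and suppose T₁ = V₁†·H·V₁ and T₂ = V₂†·(P†·H·P)·V₂ are both tridiagonal with all subdiagonal entries real and strictly positive. Then T₁ = T₂. -/
open Matrix

set_option maxHeartbeats 1000000 in
/-- **Lemma 1 of the paper.** Householder tridiagonalization of a Hermitian matrix
(characterized as the unique tridiagonal matrix with positive subdiagonal obtained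
by unitary conjugation whose first column is `e₁`) is unchanged when the rows and
columns of `H` other than the first are simultaneously permuted.  Here the
conjugation `Pᴴ * H * P` by the permutation matrix `P` of `π` is the matrix
`fun i j => H (π i) (π j)`. -/
theorem householder_tridiag_perm_invariant
    (n : ℕ) (hn : 0 < n)
    (H : Matrix (Fin n) (Fin n) ℂ) (hH : H.IsHermitian)
    (π : Equiv.Perm (Fin n)) (hπ : π ⟨0, hn⟩ = ⟨0, hn⟩)
    (V₁ V₂ T₁ T₂ : Matrix (Fin n) (Fin n) ℂ)
    (hV₁ : V₁ᴴ * V₁ = 1) (hV₂ : V₂ᴴ * V₂ = 1)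
    (hV₁col : ∀ i : Fin n, V₁ i ⟨0, hn⟩ = if i = ⟨0, hn⟩ then 1 else 0)
    (hV₂col : ∀ i : Fin n, V₂ i ⟨0, hn⟩ = if i = ⟨0, hn⟩ then 1 else 0)
    (hT₁ : T₁ = V₁ᴴ * H * V₁)
    (hT₂ : T₂ = V₂ᴴ * (Matrix.of fun i j => H (π i) (π j)) * V₂)
    (hT₁tri : ∀ i j : Fin n, ((i : ℕ) + 2 ≤ (j : ℕ) ∨ (j : ℕ) + 2 ≤ (i : ℕ)) → T₁ i j = 0)
    (hT₂tri : ∀ i j : Fin n, ((i : ℕ) + 2 ≤ (j : ℕ) ∨ (j : ℕ) + 2 ≤ (i : ℕ)) → T₂ i j = 0)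
    (hT₁sub : ∀ i j : Fin n, (i : ℕ) = (j : ℕ) + 1 → (T₁ i j).im = 0 ∧ 0 < (T₁ i j).re)
    (hT₂sub : ∀ i j : Fin n, (i : ℕ) = (j : ℕ) + 1 → (T₂ i j).im = 0 ∧ 0 < (T₂ i j).re) :
    T₁ = T₂ := by
  set z : Fin n := ⟨0, hn⟩ with hz
  -- the "de-permuted" second unitary
  set W : Matrix (Fin n) (Fin n) ℂ := Matrix.of (fun i j => V₂ (π.symm i) j) with hWdef
  have hWunit : Wᴴ * W = 1 := by
    rw [← hV₂]
    ext i j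
    simp only [Matrix.mul_apply, Matrix.conjTranspose_apply, hWdef, Matrix.of_apply]
    exact Equiv.sum_comp π.symm (fun a => star (V₂ a i) * V₂ a j)
  have hT₂W : T₂ = Wᴴ * H * W := by
    rw [hT₂]
    ext i j
    simp only [Matrix.mul_apply, Matrix.conjTranspose_apply, hWdef, Matrix.of_apply]
    rw [← Equiv.sum_comp π
      (fun l => (∑ k, star (V₂ (π.symm k) i) * H k l) * V₂ (π.symm l) j)]
    refine Finset.sum_congr rfl fun l _ => ?_
    simp only [Equiv.symm_apply_apply]
    congr 1
    rw [← Equiv.sum_comp π (fun k => star (V₂ (π.symm k) i) * H k (π l))]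
    refine Finset.sum_congr rfl fun k _ => ?_
    simp [Equiv.symm_apply_apply]
  have hWcol : ∀ i : Fin n, W i z = if i = z then 1 else 0 := by
    intro i
    have : π.symm i = z ↔ i = z := by
      constructor
      · intro h; have := congrArg π h; rwa [Equiv.apply_symm_apply, hπ] at this
      · rintro rfl; exact (Equiv.symm_apply_eq π).mpr hπ.symm
    simp only [hWdef, Matrix.of_apply, hV₂col (π.symm i), this]
  set Q : Matrix (Fin n) (Fin n) ℂ := V₁ᴴ * W with hQdef
  have hV₁sq : V₁ * V₁ᴴ = 1 := mul_eq_one_comm.mp hV₁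
  have hWsq : W * Wᴴ = 1 := mul_eq_one_comm.mp hWunit
  have hQQ : Qᴴ * Q = 1 := by
    rw [hQdef, conjTranspose_mul, conjTranspose_conjTranspose, mul_assoc,
      ← mul_assoc V₁, hV₁sq, one_mul, hWunit]
  have hcomm : T₁ * Q = Q * T₂ := by
    rw [hQdef, hT₁, hT₂W]
    rw [mul_assoc, mul_assoc, ← mul_assoc V₁, hV₁sq, one_mul, mul_assoc,
      ← mul_assoc W, ← mul_assoc W, hWsq, one_mul, ← mul_assoc]
  -- first row of V₁ is e₁ᵀ
  have hrow : ∀ j : Fin n, V₁ z j = if z = j then 1 else 0 := by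
    intro j
    have h1 : (V₁ᴴ * V₁) z j = (1 : Matrix (Fin n) (Fin n) ℂ) z j := by rw [hV₁]
    rw [Matrix.mul_apply, Matrix.one_apply] at h1
    have h2 : ∀ i : Fin n, (V₁ᴴ) z i * V₁ i j
        = if i = z then V₁ z j else 0 := by
      intro i
      rw [Matrix.conjTranspose_apply, hV₁col i]
      by_cases h : i = z <;> simp [h]
    rw [Finset.sum_congr rfl (fun i _ => h2 i), Finset.sum_ite_eq'] at h1
    simpa using h1
  -- first column of Q is e₁
  have hQ0 : ∀ j : Fin n, Q j z = if j = z then 1 else 0 := by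
    intro j
    rw [hQdef, Matrix.mul_apply]
    have h2 : ∀ i : Fin n, (V₁ᴴ) j i * W i z = if i = z then star (V₁ z j) else 0 := by
      intro i
      rw [Matrix.conjTranspose_apply, hWcol i]
      by_cases h : i = z <;> simp [h]
    rw [Finset.sum_congr rfl (fun i _ => h2 i), Finset.sum_ite_eq']
    rw [hrow j]
    by_cases h : j = z <;> simp [h, eq_comm]
  -- all columns of Q are standard basis vectors, by strong induction
  have key : ∀ m : ℕ, ∀ hm : m < n, ∀ j, Q j ⟨m, hm⟩ = if j = ⟨m, hm⟩ then 1 else 0 := by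
    intro m
    induction m using Nat.strong_induction_on with
    | _ m IH =>
      intro hm j
      cases m with
      | zero => exact hQ0 j
      | succ mm =>
        set k : Fin n := ⟨mm + 1, hm⟩ with hk
        have hmm : mm < n := Nat.lt_of_succ_lt hm
        set km : Fin n := ⟨mm, hmm⟩ with hkm
        have hIHcol : ∀ (i : Fin n), (i : ℕ) < mm + 1 →
            ∀ j' : Fin n, Q j' i = if j' = i then 1 else 0 := by
          intro i hi j'
          have := IH i.val hi i.isLt j'
          simpa using this
        -- orthogonality: earlier columns are orthogonal to column k
        have horth : ∀ j' : Fin n, (j' : ℕ) < mm + 1 → Q j' k = 0 := by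
          intro j' hj'
          have h1 : (Qᴴ * Q) j' k = (1 : Matrix (Fin n) (Fin n) ℂ) j' k := by rw [hQQ]
          have hne : j' ≠ k := by
            intro h; rw [h] at hj'; exact absurd hj' (lt_irrefl _)
          rw [Matrix.mul_apply, Matrix.one_apply_ne hne] at h1
          have h2 : ∀ i : Fin n, (Qᴴ) j' i * Q i k = if i = j' then Q j' k else 0 := by
            intro i
            rw [Matrix.conjTranspose_apply, hIHcol j' hj' i]
            by_cases h : i = j' <;> simp [h]
          rw [Finset.sum_congr rfl (fun i _ => h2 i), Finset.sum_ite_eq'] at h1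
          simpa using h1
        have hbsub : (T₂ k km).im = 0 ∧ 0 < (T₂ k km).re := hT₂sub k km rfl
        have hasub : (T₁ k km).im = 0 ∧ 0 < (T₁ k km).re := hT₁sub k km rfl
        have hbne : T₂ k km ≠ 0 := by
          intro h
          have := hbsub.2
          rw [h] at this
          simp at this
        -- three-term recurrence relation
        have hrel : ∀ j' : Fin n,
            T₁ j' km = T₂ j' km + (Q j' k - (if j' = k then 1 else 0)) * T₂ k km := by
          intro j'
          have h1 : (T₁ * Q) j' km = (Q * T₂) j' km := by rw [hcomm]
          have hL : (T₁ * Q) j' km = T₁ j' km := by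
            rw [Matrix.mul_apply]
            have h2 : ∀ i : Fin n, T₁ j' i * Q i km = if i = km then T₁ j' km else 0 := by
              intro i
              rw [hIHcol km (show (km : ℕ) < mm + 1 from Nat.lt_succ_self mm) i]
              by_cases h : i = km <;> simp [h]
            rw [Finset.sum_congr rfl (fun i _ => h2 i), Finset.sum_ite_eq']
            simp
          have hR : (Q * T₂) j' km
              = T₂ j' km + (Q j' k - (if j' = k then 1 else 0)) * T₂ k km := by
            rw [Matrix.mul_apply]
            have h3 : ∀ i : Fin n, Q j' i * T₂ i km
                = (if j' = i then T₂ i km else 0)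
                  + (if i = k then (Q j' k - (if j' = k then 1 else 0)) * T₂ k km else 0) := by
              intro i
              by_cases hik : i = k
              · rw [hik]
                by_cases hjk : j' = k <;> simp [hjk] <;> ring
              · by_cases hlt : (i : ℕ) < mm + 1
                · rw [hIHcol i hlt j']
                  by_cases hji : j' = i <;> simp [hji, hik]
                · have hge : mm + 2 ≤ (i : ℕ) := by
                    rcases Nat.lt_or_ge (i : ℕ) (mm + 2) with h | h
                    · exfalso
                      apply hik
                      apply Fin.ext
                      show (i : ℕ) = mm + 1
                      omega
                    · exact h
                  have hz2 : T₂ i km = 0 :=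
                    hT₂tri i km (Or.inr (show (km : ℕ) + 2 ≤ (i : ℕ) from hge))
                  simp [hz2, hik]
            rw [Finset.sum_congr rfl (fun i _ => h3 i), Finset.sum_add_distrib,
              Finset.sum_ite_eq, Finset.sum_ite_eq']
            simp
          rw [hL, hR] at h1
          exact h1
        -- entries far below vanish
        have hhigh : ∀ j' : Fin n, mm + 1 < (j' : ℕ) → Q j' k = 0 := by
          intro j' hj'
          have h1 := hrel j'
          have hT1z : T₁ j' km = 0 :=
            hT₁tri j' km (Or.inr (show (km : ℕ) + 2 ≤ (j' : ℕ) from hj'))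
          have hT2z : T₂ j' km = 0 :=
            hT₂tri j' km (Or.inr (show (km : ℕ) + 2 ≤ (j' : ℕ) from hj'))
          have hne : j' ≠ k := by
            intro h; rw [h] at hj'; exact absurd hj' (lt_irrefl _)
          rw [hT1z, hT2z, if_neg hne] at h1
          have h2 : Q j' k * T₂ k km = 0 := by linear_combination -h1
          exact (mul_eq_zero.mp h2).resolve_right hbne
        -- diagonal entry of Q
        have hQkb : Q k k * T₂ k km = T₁ k km := by
          have h1 := hrel k
          rw [if_pos rfl] at h1
          linear_combination -h1
        -- unit norm of column k
        have hnorm : star (Q k k) * Q k k = 1 := by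
          have h1 : (Qᴴ * Q) k k = (1 : Matrix (Fin n) (Fin n) ℂ) k k := by rw [hQQ]
          rw [Matrix.mul_apply, Matrix.one_apply_eq] at h1
          have h2 : ∀ i : Fin n, (Qᴴ) k i * Q i k
              = if i = k then star (Q k k) * Q k k else 0 := by
            intro i
            by_cases hik : i = k
            · subst hik; rw [Matrix.conjTranspose_apply, if_pos rfl]
            · have hQik : Q i k = 0 := by
                rcases Nat.lt_trichotomy (i : ℕ) (mm + 1) with h | h | h
                · exact horth i h
                · exact absurd (Fin.ext (show (i : ℕ) = (k : ℕ) from h)) hik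
                · exact hhigh i h
              rw [if_neg hik, Matrix.conjTranspose_apply, hQik, mul_zero]
          rw [Finset.sum_congr rfl (fun i _ => h2 i), Finset.sum_ite_eq'] at h1
          simpa using h1
        -- conclude Q k k = 1
        have hQkk1 : Q k k = 1 := by
          have hbC : T₂ k km = ((T₂ k km).re : ℂ) := by
            apply Complex.ext <;> simp [hbsub.1]
          have haC : T₁ k km = ((T₁ k km).re : ℂ) := by
            apply Complex.ext <;> simp [hasub.1]
          have hbne' : ((T₂ k km).re : ℂ) ≠ 0 := by
            simpa using ne_of_gt hbsub.2
          rw [hbC, haC] at hQkb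
          have hQt : Q k k = (((T₁ k km).re / (T₂ k km).re : ℝ) : ℂ) := by
            rw [Complex.ofReal_div, eq_div_iff hbne']
            exact hQkb
          rw [hQt] at hnorm ⊢
          rw [Complex.star_def, Complex.conj_ofReal, ← Complex.ofReal_mul,
            ← Complex.ofReal_one] at hnorm
          have ht2 : ((T₁ k km).re / (T₂ k km).re) * ((T₁ k km).re / (T₂ k km).re) = 1 :=
            Complex.ofReal_inj.mp hnorm
          have htpos : 0 < (T₁ k km).re / (T₂ k km).re := div_pos hasub.2 hbsub.2
          have : (T₁ k km).re / (T₂ k km).re = 1 := by nlinarith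
          rw [this, Complex.ofReal_one]
        -- conclude for column k
        rcases Nat.lt_trichotomy (j : ℕ) (mm + 1) with h | h | h
        · rw [horth j h, if_neg (by intro he; rw [he] at h; exact absurd h (lt_irrefl _))]
        · have hjk : j = k := Fin.ext (show (j : ℕ) = (k : ℕ) from h)
          rw [hjk, hQkk1, if_pos rfl]
        · rw [hhigh j h, if_neg (by intro he; rw [he] at h; exact absurd h (lt_irrefl _))]
  have hQ1 : Q = 1 := by
    ext i j
    have := key j.val j.isLt i
    simpa [Matrix.one_apply] using this
  have hWV : W = V₁ := by
    have h1 : V₁ * Q = W := by rw [hQdef, ← mul_assoc, hV₁sq, one_mul]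
    rw [hQ1, mul_one] at h1
    exact h1.symm
  rw [hT₁, hT₂W, hWV]
end

section
/- Let n ≥ 2, let x be a nonzero vector in ℝ^{n−1}, and let B be a real symmetric (n−1)×(n−1) matrix. Define u ∈ ℝⁿ as the vector whose first component is ‖x‖ and whose remaining components are those of x, set P = Iₙ − 2·u·uᵀ/‖u‖², and let A be the n×n block matrix with a zero first row and first column and lower-right block B. Then Pᵀ·A·P is the block matrix whose (1,1) entry is d = xᵀ·B·x/‖x‖², whose first column below the (1,1) entry is y = −B·x/‖x‖ + x·(xᵀ·B·x)/‖x‖³, whose first row right of the (1,1) entry is yᵀ, and whose lower-right (n−1)×(n−1) block is B' = (I − x·xᵀ/‖x‖²)·B·(I − x·xᵀ/‖x‖²). -/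
/-!
Since `‖u‖² = 2‖x‖²`, the reflector is `P = I - c u uᵀ` with `c = ‖x‖⁻²`, and for a symmetric `M`
the conjugation `(I - c v vᵀ) M (I - c v vᵀ)` is `M` corrected by the rank-one terms
`-c (v (Mv)ᵀ + (Mv) vᵀ) + c² (vᵀMv) v vᵀ`. Applying this to `(A, u)` and to `(B, x)`, with
`A u = (0, Bx)` and `uᵀ A u = xᵀ B x`, the two sides agree block by block.
-/

open Matrix

namespace Matrix

theorem vecMulVec_sumElim {l m n o α : Type*} [Mul α] (a : l → α) (b : m → α) (c : n → α)
    (d : o → α) :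
    vecMulVec (Sum.elim a b) (Sum.elim c d) =
      fromBlocks (vecMulVec a c) (vecMulVec a d) (vecMulVec b c) (vecMulVec b d) := by
  ext (i | i) (j | j) <;> rfl

theorem IsSymm.vecMul_eq_mulVec {n α : Type*} [Fintype n] [CommSemiring α] {M : Matrix n n α}
    (hM : M.IsSymm) (v : n → α) : v ᵥ* M = M *ᵥ v := by
  rw [← vecMul_transpose, hM.eq]

theorem IsSymm.conj_one_sub_smul_vecMulVec_self {n α : Type*} [Fintype n] [DecidableEq n]
    [CommRing α] {M : Matrix n n α} (hM : M.IsSymm) (c : α) (v : n → α) :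
    (1 - c • vecMulVec v v) * M * (1 - c • vecMulVec v v) =
      M - c • (vecMulVec v (M *ᵥ v) + vecMulVec (M *ᵥ v) v)
        + (c ^ 2 * (v ⬝ᵥ M *ᵥ v)) • vecMulVec v v := by
  have hMP : M * (1 - c • vecMulVec v v) = M - c • vecMulVec (M *ᵥ v) v := by
    rw [mul_sub, mul_one, Matrix.mul_smul, mul_vecMulVec]
  rw [Matrix.mul_assoc, hMP, sub_mul, one_mul, Matrix.smul_mul, mul_sub, Matrix.mul_smul,
    vecMulVec_mul, hM.vecMul_eq_mulVec, vecMulVec_mul_vecMulVec, vecMulVec_smul, smul_smul]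
  module

end Matrix

/-- **Zero-insertion Householder step (Eqs. S5–S8).** With `x ∈ ℝ^{n-1}` nonzero
(here `n - 1 = k + 1`, encoding `n ≥ 2`), `B` real symmetric, `u = (‖x‖, x)`,
`P = I - 2 u uᵀ / ‖u‖²`, and `A` the block matrix with zero first row and column
and lower-right block `B`, the matrix `Pᵀ A P` has `(1,1)` entry
`d = xᵀ B x / ‖x‖²`, first column/row below/right of it given by
`y = -Bx/‖x‖ + x (xᵀ B x)/‖x‖³`, and lower-right block
`B' = (I - x xᵀ/‖x‖²) B (I - x xᵀ/‖x‖²)`. -/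
theorem zero_insertion_householder_step
    (k : ℕ) (x : Fin (k + 1) → ℝ) (hx : x ≠ 0)
    (B : Matrix (Fin (k + 1)) (Fin (k + 1)) ℝ) (hB : B.IsSymm)
    (u : Fin 1 ⊕ Fin (k + 1) → ℝ)
    (hu : u = Sum.elim (fun _ => Real.sqrt (x ⬝ᵥ x)) x)
    (P A : Matrix (Fin 1 ⊕ Fin (k + 1)) (Fin 1 ⊕ Fin (k + 1)) ℝ)
    (hP : P = 1 - (2 / (u ⬝ᵥ u)) • Matrix.vecMulVec u u)
    (hA : A = Matrix.fromBlocks 0 0 0 B)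
    (d : ℝ) (hd : d = (x ⬝ᵥ B.mulVec x) / (x ⬝ᵥ x))
    (y : Fin (k + 1) → ℝ)
    (hy : y = (-(Real.sqrt (x ⬝ᵥ x))⁻¹) • B.mulVec x
        + ((x ⬝ᵥ B.mulVec x) / (Real.sqrt (x ⬝ᵥ x)) ^ 3) • x)
    (B' : Matrix (Fin (k + 1)) (Fin (k + 1)) ℝ)
    (hB' : B' = (1 - (x ⬝ᵥ x)⁻¹ • Matrix.vecMulVec x x) * B
        * (1 - (x ⬝ᵥ x)⁻¹ • Matrix.vecMulVec x x)) :
    Pᵀ * A * P = Matrix.fromBlocks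
      (Matrix.of fun _ _ => d)
      (Matrix.of fun _ j => y j)
      (Matrix.of fun i _ => y i)
      B' := by
  have hxx : 0 < x ⬝ᵥ x :=
    (dotProduct_self_star_nonneg x : 0 ≤ x ⬝ᵥ x).lt_of_ne' (mt dotProduct_self_eq_zero.mp hx)
  set s := Real.sqrt (x ⬝ᵥ x)
  have hs : s ^ 2 = x ⬝ᵥ x := Real.sq_sqrt hxx.le
  have hs0 : s ≠ 0 := (Real.sqrt_pos.mpr hxx).ne'
  have hP' : P = 1 - (x ⬝ᵥ x)⁻¹ • vecMulVec u u := by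
    have huu : u ⬝ᵥ u = 2 * (x ⬝ᵥ x) := by
      rw [hu, sumElim_dotProduct_sumElim, ← hs]
      simp [dotProduct, ← two_mul, sq]
    rw [hP, huu, div_mul_cancel_left₀ two_ne_zero]
  have hAu : A *ᵥ u = Sum.elim (0 : Fin 1 → ℝ) (B *ᵥ x) := by
    rw [hA, hu, fromBlocks_mulVec]
    simp
  have hA_symm : A.IsSymm := hA ▸ IsSymm.fromBlocks isSymm_zero transpose_zero hB
  have huAu : u ⬝ᵥ A *ᵥ u = x ⬝ᵥ B *ᵥ x := by
    rw [hAu, hu, sumElim_dotProduct_sumElim]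
    simp
  rw [hB', hB.conj_one_sub_smul_vecMulVec_self, hP', transpose_sub, transpose_one, transpose_smul,
    transpose_vecMulVec, hA_symm.conj_one_sub_smul_vecMulVec_self, huAu, hAu, hu,
    vecMulVec_sumElim, vecMulVec_sumElim, vecMulVec_sumElim, hA]
  ext (i | i) (j | j)
  all_goals
    simp only [vecMulVec_zero, zero_vecMulVec, smul_add, Matrix.add_apply, Matrix.sub_apply,
      fromBlocks_apply₁₁, fromBlocks_apply₁₂, fromBlocks_apply₂₁, fromBlocks_apply₂₂,
      Matrix.zero_apply, Matrix.smul_apply, vecMulVec_apply, Pi.zero_apply, smul_eq_mul, mul_zero,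
      add_zero, zero_add, zero_sub, sub_self, hd, hy, neg_smul, Pi.add_apply, Pi.neg_apply,
      Pi.smul_apply, of_apply]
  all_goals rw [← hs]; field_simp
end

section
/- Let n ≥ 2, let x be a nonzero vector in ℝ^{n−1} that is not of the form (−c, 0, …, 0) with c > 0, and let B be a real symmetric (n−1)×(n−1) matrix. Define u = x + ‖x‖·e₁ (where e₁ is the first standard basis vector of ℝ^{n−1}) and P = I − 2·u·uᵀ/‖u‖². Then the sum over m ≥ 2 of the squares of the entries (P·B·P)_{m1} equals (1/‖x‖²)·(B·x)ᵀ·(I − x·xᵀ/‖x‖²)·(B·x). -/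
open Matrix

private lemma vecMulVec_mulVec' {n : ℕ} (u v y : Fin n → ℝ) :
    (Matrix.vecMulVec u v).mulVec y = (v ⬝ᵥ y) • u := by
  ext i
  simp [Matrix.mulVec, Matrix.vecMulVec, dotProduct, Finset.mul_sum,
    mul_comm, mul_assoc, mul_left_comm]

/-- **Eq. S16 of the paper.** For a direct Householder tridiagonalization step with
`u = x + ‖x‖ e₁` (where `x ∈ ℝ^{n-1}`, `n - 1 = k + 1`, is nonzero and not of the
form `(-c, 0, …, 0)` with `c > 0`) and reflector `P = I - 2 u uᵀ / ‖u‖²`, the sum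
of the squares of the below-diagonal entries of the first column of `P B P`
equals `(1/‖x‖²) (Bx)ᵀ (I - x xᵀ/‖x‖²) (Bx)`. -/
theorem householder_step_subdiagonal_norm
    (k : ℕ) (x : Fin (k + 1) → ℝ) (hx : x ≠ 0)
    (hx' : ¬ ∃ c : ℝ, 0 < c ∧ x = (Pi.single 0 (-c) : Fin (k + 1) → ℝ))
    (B : Matrix (Fin (k + 1)) (Fin (k + 1)) ℝ) (hB : B.IsSymm)
    (u : Fin (k + 1) → ℝ)
    (hu : u = x + Real.sqrt (x ⬝ᵥ x) • (Pi.single 0 1 : Fin (k + 1) → ℝ))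
    (P : Matrix (Fin (k + 1)) (Fin (k + 1)) ℝ)
    (hP : P = 1 - (2 / (u ⬝ᵥ u)) • Matrix.vecMulVec u u) :
    ∑ m : Fin k, ((P * B * P) m.succ 0) ^ 2
      = (1 / (x ⬝ᵥ x)) *
        (B.mulVec x ⬝ᵥ (1 - (x ⬝ᵥ x)⁻¹ • Matrix.vecMulVec x x).mulVec (B.mulVec x)) := by
  set r := Real.sqrt (x ⬝ᵥ x) with hrdef
  have hxx : 0 < x ⬝ᵥ x := by
    have h0 : 0 ≤ x ⬝ᵥ x := Finset.sum_nonneg fun i _ => mul_self_nonneg _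
    exact h0.lt_of_ne fun h => hx ((dotProduct_self_eq_zero).1 h.symm)
  have hr2 : r * r = x ⬝ᵥ x := Real.mul_self_sqrt hxx.le
  have hrpos : 0 < r := Real.sqrt_pos.2 hxx
  have hx00 : x 0 * x 0 ≤ x ⬝ᵥ x := by
    have := Finset.single_le_sum (f := fun i => x i * x i)
      (fun i _ => mul_self_nonneg (x i)) (Finset.mem_univ (0 : Fin (k + 1)))
    simpa [dotProduct] using this
  have hr0 : 0 < r + x 0 := by
    rcases lt_trichotomy (r + x 0) 0 with h | h | h
    · nlinarith
    · exfalso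
      have hx0 : x 0 = -r := by linarith
      have hsum : ∑ i, x i * x i = x 0 * x 0 := by
        rw [show (∑ i, x i * x i) = x ⬝ᵥ x from rfl, ← hr2, hx0]; ring
      have hrest : ∀ i ∈ (Finset.univ.erase (0 : Fin (k + 1))), x i * x i = 0 := by
        have h0 : ∑ i ∈ Finset.univ.erase (0 : Fin (k + 1)), x i * x i = 0 := by
          rw [Finset.sum_erase_eq_sub (Finset.mem_univ (0 : Fin (k + 1))), hsum]
          ring
        intro i hi
        have := Finset.sum_eq_zero_iff_of_nonneg
          (fun i _ => mul_self_nonneg (x i)) |>.1 h0 i hi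
        exact this
      apply hx'
      refine ⟨r, hrpos, ?_⟩
      funext i
      by_cases hi : i = 0
      · subst hi; simp [hx0]
      · have := hrest i (Finset.mem_erase.2 ⟨hi, Finset.mem_univ i⟩)
        have hxi : x i = 0 := by nlinarith
        simp [hxi, Pi.single_eq_of_ne hi]
    · exact h
  have hu0 : u 0 = x 0 + r := by
    rw [hu]; simp
  have huu : u ⬝ᵥ u = 2 * r * (r + x 0) := by
    rw [hu]
    simp only [dotProduct_add, add_dotProduct, smul_dotProduct, dotProduct_smul,
      dotProduct_single, single_dotProduct, smul_eq_mul]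
    simp only [Pi.single_eq_same, mul_one, one_mul, Pi.add_apply, Pi.smul_apply,
      smul_eq_mul]
    nlinarith [hr2]
  have huu_pos : 0 < u ⬝ᵥ u := by rw [huu]; positivity
  have hrne : r ≠ 0 := hrpos.ne'
  set e : Fin (k + 1) → ℝ := Pi.single 0 1 with he
  -- action of P on vectors
  have hPv : ∀ v : Fin (k + 1) → ℝ,
      P.mulVec v = v - ((2 / (u ⬝ᵥ u)) * (u ⬝ᵥ v)) • u := by
    intro v
    rw [hP, Matrix.sub_mulVec, Matrix.one_mulVec, Matrix.smul_mulVec,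
      vecMulVec_mulVec', smul_smul]
  have hPe : P.mulVec e = (-(r⁻¹)) • x := by
    rw [hPv]
    have hue : u ⬝ᵥ e = x 0 + r := by
      rw [he, dotProduct_single, mul_one, hu0]
    rw [hue]
    have hcoef : 2 / (u ⬝ᵥ u) * (x 0 + r) = r⁻¹ := by
      rw [huu]; field_simp; ring
    rw [hcoef, hu]
    funext i
    simp only [he, Pi.sub_apply, Pi.add_apply, Pi.smul_apply, Pi.neg_apply, smul_eq_mul,
      mul_add, neg_mul]
    have h1 : r⁻¹ * (r * (Pi.single 0 1 : Fin (k+1) → ℝ) i)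
        = (Pi.single 0 1 : Fin (k+1) → ℝ) i := by
      rw [← mul_assoc, inv_mul_cancel₀ hrne, one_mul]
    rw [h1]
    ring
  set y := B.mulVec x with hy
  -- key scalar computations
  have hzz : ∀ v : Fin (k + 1) → ℝ, P.mulVec v ⬝ᵥ P.mulVec v = v ⬝ᵥ v := by
    intro v
    rw [hPv]
    simp only [sub_dotProduct, dotProduct_sub, smul_dotProduct, dotProduct_smul,
      smul_eq_mul]
    rw [dotProduct_comm u v]
    field_simp
    ring
  have hz0 : (P.mulVec y) 0 = -((x ⬝ᵥ y) / r) := by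
    rw [hPv]
    have huy : u ⬝ᵥ y = x ⬝ᵥ y + r * y 0 := by
      rw [hu, he]
      simp only [add_dotProduct, smul_dotProduct, single_dotProduct,
        smul_eq_mul, one_mul]
    have : (2 / (u ⬝ᵥ u)) * u 0 = r⁻¹ := by
      rw [huu, hu0]; field_simp; ring
    simp only [Pi.sub_apply, Pi.smul_apply, smul_eq_mul]
    rw [huy, mul_comm (2 / (u ⬝ᵥ u)), mul_assoc, this]
    field_simp
    ring
  -- the first column of P * B * P
  set w := P.mulVec (B.mulVec (P.mulVec e)) with hw
  have hcol : ∀ i, (P * B * P) i 0 = w i := by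
    intro i
    have : (P * B * P).mulVec e = w := by
      rw [hw, ← Matrix.mulVec_mulVec, ← Matrix.mulVec_mulVec]
    rw [← this, he]
    simp [Matrix.mulVec_single]
  have hwPy : w = (-(r⁻¹)) • P.mulVec y := by
    rw [hw, hPe, Matrix.mulVec_smul, Matrix.mulVec_smul, hy]
  have hww : w ⬝ᵥ w = r⁻¹ * r⁻¹ * (y ⬝ᵥ y) := by
    rw [hwPy]
    simp only [smul_dotProduct, dotProduct_smul, smul_eq_mul, hzz]
    ring
  have hw0 : w 0 = (x ⬝ᵥ y) / (r * r) := by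
    rw [hwPy]
    simp only [Pi.smul_apply, smul_eq_mul, hz0]
    field_simp
  -- split the sum
  have hsplit : ∑ m : Fin k, ((P * B * P) m.succ 0) ^ 2 = w ⬝ᵥ w - w 0 ^ 2 := by
    have : w ⬝ᵥ w = ∑ i, w i ^ 2 := by
      simp [dotProduct, sq]
    rw [this, Fin.sum_univ_succ]
    have : ∀ m : Fin k, (P * B * P) m.succ 0 = w m.succ := fun m => hcol m.succ
    simp only [this]
    ring
  -- RHS computation
  have hrhs : (1 - (x ⬝ᵥ x)⁻¹ • Matrix.vecMulVec x x).mulVec y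
      = y - ((x ⬝ᵥ x)⁻¹ * (x ⬝ᵥ y)) • x := by
    rw [Matrix.sub_mulVec, Matrix.one_mulVec, Matrix.smul_mulVec,
      vecMulVec_mulVec', smul_smul]
  rw [hsplit, hww, hw0, hrhs]
  simp only [dotProduct_sub, dotProduct_smul, smul_eq_mul]
  rw [dotProduct_comm y x, ← hr2]
  have hrne : r ≠ 0 := hrpos.ne'
  field_simp
end

section
/- Let x be a nonzero vector in ℝ^m, let B be a real symmetric m×m matrix, and let Q be an m×m real orthogonal matrix. Define d(x,B) = xᵀ·B·x/‖x‖², f(x,B) = −B·x/‖x‖ + x·(xᵀ·B·x)/‖x‖³, and g(x,B) = (I − x·xᵀ/‖x‖²)·B·(I − x·xᵀ/‖x‖²). Then d(Qᵀ·x, Qᵀ·B·Q) = d(x,B), f(Qᵀ·x, Qᵀ·B·Q) = Qᵀ·f(x,B), and g(Qᵀ·x, Qᵀ·B·Q) = Qᵀ·g(x,B)·Q. -/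
open Matrix

/-- Next-stage diagonal entry of a zero-insertion Householder step. -/
noncomputable def hhD {m : ℕ} (x : Fin m → ℝ) (B : Matrix (Fin m) (Fin m) ℝ) : ℝ :=
  (x ⬝ᵥ B.mulVec x) / (x ⬝ᵥ x)

/-- Next-stage coupling vector of a zero-insertion Householder step. -/
noncomputable def hhF {m : ℕ} (x : Fin m → ℝ) (B : Matrix (Fin m) (Fin m) ℝ) :
    Fin m → ℝ :=
  (-(Real.sqrt (x ⬝ᵥ x))⁻¹) • B.mulVec x
    + ((x ⬝ᵥ B.mulVec x) / (Real.sqrt (x ⬝ᵥ x)) ^ 3) • x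

/-- Next-stage residual block of a zero-insertion Householder step. -/
noncomputable def hhG {m : ℕ} (x : Fin m → ℝ) (B : Matrix (Fin m) (Fin m) ℝ) :
    Matrix (Fin m) (Fin m) ℝ :=
  (1 - (x ⬝ᵥ x)⁻¹ • Matrix.vecMulVec x x) * B * (1 - (x ⬝ᵥ x)⁻¹ • Matrix.vecMulVec x x)

private lemma hh_dot_aux {m : ℕ} (Q : Matrix (Fin m) (Fin m) ℝ) (x y : Fin m → ℝ)
    (h1 : Q * Qᵀ = 1) : (Qᵀ.mulVec x) ⬝ᵥ (Qᵀ.mulVec y) = x ⬝ᵥ y := by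
  rw [dotProduct_mulVec, vecMul_transpose, mulVec_mulVec, h1, one_mulVec]

private lemma hh_mulVec_aux {m : ℕ} (Q B : Matrix (Fin m) (Fin m) ℝ) (x : Fin m → ℝ)
    (h1 : Q * Qᵀ = 1) :
    (Qᵀ * B * Q).mulVec (Qᵀ.mulVec x) = Qᵀ.mulVec (B.mulVec x) := by
  rw [mulVec_mulVec, mulVec_mulVec, mul_assoc (Qᵀ * B), h1, mul_one]

private lemma hh_vecMulVec_aux {m : ℕ} (Q : Matrix (Fin m) (Fin m) ℝ) (x : Fin m → ℝ) :
    vecMulVec (Qᵀ.mulVec x) (Qᵀ.mulVec x) = Qᵀ * vecMulVec x x * Q := by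
  ext i j
  simp [vecMulVec_apply, mulVec, mul_apply, dotProduct, Finset.sum_mul, Finset.mul_sum]
  congr 1; ext a; congr 1; ext b; ring

/-- **Covariance of the zero-insertion Householder step (proof of Lemma 1).**
Under an orthogonal change of data `x ↦ Qᵀ x`, `B ↦ Qᵀ B Q`, the diagonal entry
`d` is invariant and the coupling vector and residual block transform
covariantly. -/
theorem householder_step_orthogonal_covariance
    (m : ℕ) (x : Fin m → ℝ) (hx : x ≠ 0)
    (B Q : Matrix (Fin m) (Fin m) ℝ) (hB : B.IsSymm)
    (hQ : Qᵀ * Q = 1) :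
    hhD (Qᵀ.mulVec x) (Qᵀ * B * Q) = hhD x B ∧
    hhF (Qᵀ.mulVec x) (Qᵀ * B * Q) = Qᵀ.mulVec (hhF x B) ∧
    hhG (Qᵀ.mulVec x) (Qᵀ * B * Q) = Qᵀ * hhG x B * Q := by
  have h1 : Q * Qᵀ = 1 := mul_eq_one_comm.mp hQ
  have hmv := hh_mulVec_aux Q B x h1
  have hnorm : (Qᵀ.mulVec x) ⬝ᵥ (Qᵀ.mulVec x) = x ⬝ᵥ x := hh_dot_aux Q x x h1
  have hquad : (Qᵀ.mulVec x) ⬝ᵥ ((Qᵀ * B * Q).mulVec (Qᵀ.mulVec x)) = x ⬝ᵥ B.mulVec x := by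
    rw [hmv, hh_dot_aux Q x (B.mulVec x) h1]
  refine ⟨?_, ?_, ?_⟩
  · rw [hhD, hhD, hnorm, hquad]
  · rw [hhF, hhF, hmv, hnorm, hh_dot_aux Q x (B.mulVec x) h1, mulVec_add, mulVec_smul, mulVec_smul]
  · rw [hhG, hhG, hnorm, hh_vecMulVec_aux Q x]
    have hP : (1 : Matrix (Fin m) (Fin m) ℝ) - (x ⬝ᵥ x)⁻¹ • (Qᵀ * vecMulVec x x * Q)
        = Qᵀ * (1 - (x ⬝ᵥ x)⁻¹ • vecMulVec x x) * Q := by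
      rw [Matrix.mul_sub, Matrix.sub_mul, Matrix.mul_one, hQ, Matrix.mul_smul,
        Matrix.smul_mul, mul_assoc]
    rw [hP]
    set P := (1 : Matrix (Fin m) (Fin m) ℝ) - (x ⬝ᵥ x)⁻¹ • vecMulVec x x with hPdef
    have key : Qᵀ * P * Q * (Qᵀ * B * Q) * (Qᵀ * P * Q)
        = Qᵀ * (P * ((Q * Qᵀ) * (B * ((Q * Qᵀ) * P)))) * Q := by noncomm_ring
    rw [key, h1, one_mul, one_mul, ← mul_assoc P B]
end

section
/- Let w₋₂, w₋₁, w₀, w₁ be strictly positive real numbers and set x = w₋₁/w₀, y = w₁/w₀, z = w₋₂/w₀. Let p be the complex cubic polynomial p(X) = w₋₂·X³ + w₋₁·X² + w₀·X + w₁, and assume p has no root of modulus exactly 1. If z − z² − x·y + y² < 0, 1 − x − y + z > 0, and |y − x| − 2z ≤ 0, then all three roots of p (counted with multiplicity) lie in the open unit disk {ζ ∈ ℂ : |ζ| < 1}. -/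
/-!
Normalise the cubic to `q(t) = z t³ + x t² + t + y`. If two roots `t ≠ r` of `q` are known,
the third is `v = -x/z - t - r` and Vieta's formulas give
`1 - x - y + z = z (1 + t)(1 + r)(1 + v)`, `z² - z + x y - y² = z² (1 - t r)(1 - t v)(1 - r v)`
and `x - y = z (t r v - (t + r + v))`.

For a nonreal root `ζ`, take `r = ζ̄`; the third root `v` is real and the second identity reads
`z² - z + x y - y² = z² (1 - |ζ|²) |1 - ζ v|²`, so `C₃ < 0` forces `|ζ| < 1`.
A real root is negative since all coefficients are positive. If it were `< -1`, then since
`q(-1) < 0 < q(0)` there is a second root in `(-1, 0)`, and the three identities, read through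
`C₂`, `C₃` and `C₄`, become incompatible sign conditions on the three roots.
-/

open Polynomial ComplexConjugate

theorem cubic_coeffs_of_two_roots {K : Type*} [Field K] {a b c d t r v : K}
    (htr : t ≠ r) (ht : a * t ^ 3 + b * t ^ 2 + c * t + d = 0)
    (hr : a * r ^ 3 + b * r ^ 2 + c * r + d = 0) (hb : b = -(a * (t + r + v))) :
    c = a * (t * r + t * v + r * v) ∧ d = -(a * t * r * v) := by
  have hc : c = a * (t * r + t * v + r * v) := by
    have h : (t - r) * (a * (t ^ 2 + t * r + r ^ 2) + b * (t + r) + c) = 0 := by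
      linear_combination ht - hr
    linear_combination (mul_eq_zero.mp h).resolve_left (sub_ne_zero.mpr htr) - (t + r) * hb
  exact ⟨hc, by linear_combination ht - t ^ 2 * hb - t * hc⟩

theorem two_lt_prod_sub_sum {t r v : ℝ} (ht : t < -1) (hr : -1 < r) (hr0 : r < 0)
    (h2 : 0 < (1 + t) * (1 + r) * (1 + v)) (h3 : 0 < (1 - t * r) * (1 - t * v) * (1 - r * v)) :
    2 < t * r * v - (t + r + v) := by
  have hv : v < -1 := by
    by_contra! hv
    nlinarith [mul_nonneg (mul_nonneg (by linarith : (0:ℝ) ≤ -(1 + t)) (by linarith : (0:ℝ) ≤ 1 + r))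
      (by linarith : (0:ℝ) ≤ 1 + v)]
  have htv : 1 - t * v < 0 := by nlinarith
  have hmix : (1 - t * r) * (1 - r * v) < 0 := by
    by_contra! h
    nlinarith [mul_nonpos_of_nonneg_of_nonpos h htv.le]
  have key : -r * (t * r * v - (t + r + v) - 2) = -((1 - t * r) * (1 - r * v)) + (1 + r) ^ 2 := by
    ring
  have hpos : 0 < -r * (t * r * v - (t + r + v) - 2) := by rw [key]; nlinarith [sq_nonneg (1 + r)]
  linarith [pos_of_mul_pos_right hpos (by linarith)]

section CubicRoots

variable {x y z : ℝ}

theorem neg_of_cubic_root (hx : 0 ≤ x) (hy : 0 < y) (hz : 0 ≤ z) {t : ℝ}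
    (ht : z * t ^ 3 + x * t ^ 2 + t + y = 0) : t < 0 := by
  by_contra! h
  nlinarith [mul_nonneg hz (pow_nonneg h 3), mul_nonneg hx (pow_nonneg h 2)]

theorem neg_one_lt_of_cubic_root (hy : 0 < y) (hz : 0 < z)
    (hC3 : z - z ^ 2 - x * y + y ^ 2 < 0) (hC2 : 1 - x - y + z > 0) (hC4 : |y - x| - 2 * z ≤ 0)
    {t : ℝ} (ht : z * t ^ 3 + x * t ^ 2 + t + y = 0) : -1 < t := by
  by_contra! htle
  have ht1 : t < -1 := by
    refine htle.lt_of_ne fun h => ?_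
    subst h
    linarith
  obtain ⟨r, ⟨hr, hr0⟩, hrroot⟩ : ∃ r ∈ Set.Ioo (-1 : ℝ) 0, z * r ^ 3 + x * r ^ 2 + r + y = 0 :=
    intermediate_value_Ioo (by norm_num) (by fun_prop) ⟨by linarith, by linarith⟩
  obtain ⟨v, hxv⟩ : ∃ v, x = -(z * (t + r + v)) := ⟨-x / z - t - r, by field_simp; ring⟩
  obtain ⟨h1, hy'⟩ := cubic_coeffs_of_two_roots (c := 1) (d := y) (by linarith : t ≠ r)
    (by linear_combination ht) (by linear_combination hrroot) hxv
  have h2 : 0 < (1 + t) * (1 + r) * (1 + v) := by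
    have : 1 - x - y + z = z * ((1 + t) * (1 + r) * (1 + v)) := by
      rw [hxv, hy']; linear_combination h1
    exact pos_of_mul_pos_right (this ▸ hC2) hz.le
  have h3 : 0 < (1 - t * r) * (1 - t * v) * (1 - r * v) := by
    have hid : z ^ 2 - z + x * y - y ^ 2 = z ^ 2 * ((1 - t * r) * (1 - t * v) * (1 - r * v)) := by
      rw [hxv, hy']; linear_combination (-z) * h1
    exact pos_of_mul_pos_right (by linarith) (sq_nonneg z)
  have h4 : x - y = z * (t * r * v - (t + r + v)) := by rw [hxv, hy']; ring
  have hxy : x - y ≤ 2 * z := by linarith [neg_abs_le (y - x)]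
  linarith [mul_lt_mul_of_pos_left (two_lt_prod_sub_sum ht1 hr hr0 h2 h3) hz]

theorem norm_lt_one_of_cubic_root (hz : z ≠ 0) (hC3 : z - z ^ 2 - x * y + y ^ 2 < 0)
    {ζ : ℂ} (hζ : z * ζ ^ 3 + x * ζ ^ 2 + ζ + y = 0) (him : ζ.im ≠ 0) : ‖ζ‖ < 1 := by
  have hconj : z * conj ζ ^ 3 + x * conj ζ ^ 2 + 1 * conj ζ + y = 0 := by
    simpa using congrArg conj hζ
  have hne : ζ ≠ conj ζ := fun h => him (Complex.conj_eq_iff_im.mp h.symm)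
  have hz' : (z : ℂ) ≠ 0 := by exact_mod_cast hz
  obtain ⟨v, hxv⟩ : ∃ v : ℝ, (x : ℂ) = -(z * (ζ + conj ζ + v)) :=
    ⟨-x / z - 2 * ζ.re, by rw [Complex.add_conj]; push_cast; field_simp; ring⟩
  obtain ⟨h1, hy'⟩ := cubic_coeffs_of_two_roots hne (by linear_combination hζ) hconj hxv
  have key : ((z ^ 2 - z + x * y - y ^ 2 : ℝ) : ℂ)
      = ((z ^ 2 * (1 - ‖ζ‖ ^ 2) * Complex.normSq (1 - ζ * v) : ℝ) : ℂ) := by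
    rw [Complex.ofReal_mul, Complex.normSq_eq_conj_mul_self]
    push_cast
    rw [← Complex.conj_mul', hxv, hy']
    simp only [map_sub, map_one, map_mul, Complex.conj_ofReal]
    linear_combination (-(z : ℂ)) * h1
  have hpos : 0 < z ^ 2 * (1 - ‖ζ‖ ^ 2) * Complex.normSq (1 - ζ * v) := by
    rw [← Complex.ofReal_injective key]; linarith
  have hdisk : 0 < 1 - ‖ζ‖ ^ 2 :=
    pos_of_mul_pos_right (pos_of_mul_pos_left hpos (Complex.normSq_nonneg _)) (sq_nonneg z)
  nlinarith [norm_nonneg ζ]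

end CubicRoots

theorem winding_two_roots_in_disk_general
    (wm2 wm1 w0 w1 : ℝ)
    (hm2 : 0 < wm2) (hm1 : 0 < wm1) (h0 : 0 < w0) (h1 : 0 < w1)
    (x y z : ℝ) (hx : x = wm1 / w0) (hy : y = w1 / w0) (hz : z = wm2 / w0)
    (p : Polynomial ℂ)
    (hp : p = C (wm2 : ℂ) * X ^ 3 + C (wm1 : ℂ) * X ^ 2 + C (w0 : ℂ) * X + C (w1 : ℂ))
    (hC3 : z - z ^ 2 - x * y + y ^ 2 < 0)
    (hC2 : 1 - x - y + z > 0)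
    (hC4 : |y - x| - 2 * z ≤ 0) :
    ∀ ζ : ℂ, p.IsRoot ζ → ‖ζ‖ < 1 := by
  intro ζ hζ
  have hx0 : 0 < x := hx ▸ div_pos hm1 h0
  have hy0 : 0 < y := hy ▸ div_pos h1 h0
  have hz0 : 0 < z := hz ▸ div_pos hm2 h0
  have hq : (z : ℂ) * ζ ^ 3 + x * ζ ^ 2 + ζ + y = 0 := by
    have hw0 : (w0 : ℂ) ≠ 0 := by exact_mod_cast h0.ne'
    simp only [hp, IsRoot, eval_add, eval_mul, eval_C, eval_pow, eval_X] at hζ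
    subst hx hy hz
    push_cast
    field_simp
    linear_combination hζ
  by_cases him : ζ.im = 0
  · obtain ⟨t, rfl⟩ : ∃ t : ℝ, ζ = t := ⟨ζ.re, Complex.ext rfl (by simpa using him)⟩
    have ht : z * t ^ 3 + x * t ^ 2 + t + y = 0 := by exact_mod_cast hq
    rw [Complex.norm_real, Real.norm_eq_abs, abs_lt]
    exact ⟨neg_one_lt_of_cubic_root hy0 hz0 hC3 hC2 hC4 ht,
      (neg_of_cubic_root hx0.le hy0 hz0.le ht).trans one_pos⟩
  · exact norm_lt_one_of_cubic_root hz0.ne' hC3 hq him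

/-- **The `|γ| = 2` row of Table S1.** For positive hoppings `w₋₂, w₋₁, w₀, w₁`
with `x = w₋₁/w₀`, `y = w₁/w₀`, `z = w₋₂/w₀`, if the cubic
`p(X) = w₋₂ X³ + w₋₁ X² + w₀ X + w₁` has no root on the unit circle and
`z - z² - x y + y² < 0`, `1 - x - y + z > 0`, `|y - x| - 2z ≤ 0`, then all roots
of `p` lie in the open unit disk. -/
theorem winding_two_roots_in_disk
    (wm2 wm1 w0 w1 : ℝ)
    (hm2 : 0 < wm2) (hm1 : 0 < wm1) (h0 : 0 < w0) (h1 : 0 < w1)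
    (x y z : ℝ) (hx : x = wm1 / w0) (hy : y = w1 / w0) (hz : z = wm2 / w0)
    (p : Polynomial ℂ)
    (hp : p = C (wm2 : ℂ) * X ^ 3 + C (wm1 : ℂ) * X ^ 2 + C (w0 : ℂ) * X + C (w1 : ℂ))
    (hcirc : ∀ ζ : ℂ, p.IsRoot ζ → ‖ζ‖ ≠ 1)
    (hC3 : z - z ^ 2 - x * y + y ^ 2 < 0)
    (hC2 : 1 - x - y + z > 0)
    (hC4 : |y - x| - 2 * z ≤ 0) :
    ∀ ζ : ℂ, p.IsRoot ζ → ‖ζ‖ < 1 :=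
  winding_two_roots_in_disk_general wm2 wm1 w0 w1 hm2 hm1 h0 h1 x y z hx hy hz p hp hC3 hC2 hC4
end

section
/- Let w₋₂, w₋₁, w₀, w₁ be strictly positive real numbers. Let p be the complex cubic polynomial p(X) = w₋₂·X³ + w₋₁·X² + w₀·X + w₁, and assume p has no root of modulus exactly 1. If w₀ + w₋₂ < w₋₁ + w₁, then the number of roots of p (counted with multiplicity) lying in the open unit disk {ζ ∈ ℂ : |ζ| < 1} is either 0 or 2. -/
/-!
Evaluating at `±1` gives `p(1) p(-1) = lc(p)² ∏ (ζ² - 1)` over the roots `ζ` of `p`. The non-real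
roots of a real polynomial come in conjugate pairs, which lie on the same side of the unit circle and
contribute `|ζ² - 1|² > 0`; a real root contributes a negative factor exactly when it lies in the
open unit disk. So the number of roots in the disk is even iff `p(1) p(-1) > 0`. For the cubic,
`p(1) > 0` by positivity and `p(-1) = w₋₁ + w₁ - w₀ - w₋₂ > 0`, and there are at most three roots.
-/

open Polynomial ComplexConjugate

namespace Multiset

variable {s : Multiset ℂ}

theorem exists_eq_cons_of_map_conj_eq (hs : s.map conj = s) {z : ℂ} (hz : z ∈ s)
    (hzr : conj z = z) : ∃ t, s = z ::ₘ t ∧ t.map conj = t := by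
  obtain ⟨t, rfl⟩ := exists_cons_of_mem hz
  rw [map_cons, hzr] at hs
  exact ⟨t, rfl, (cons_inj_right z).1 hs⟩

theorem exists_eq_cons_cons_conj_of_map_conj_eq (hs : s.map conj = s) {z : ℂ} (hz : z ∈ s)
    (hzr : conj z ≠ z) : ∃ t, s = z ::ₘ conj z ::ₘ t ∧ t.map conj = t := by
  obtain ⟨u, rfl⟩ := exists_cons_of_mem hz
  have hconj : conj z ∈ u := by
    have h : conj z ∈ (z ::ₘ u).map conj := mem_map_of_mem _ (mem_cons_self _ _)
    rw [hs] at h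
    exact (mem_cons.1 h).resolve_left hzr
  obtain ⟨t, rfl⟩ := exists_cons_of_mem hconj
  rw [map_cons, map_cons, Complex.conj_conj, cons_swap] at hs
  exact ⟨t, rfl, (cons_inj_right _).1 ((cons_inj_right _).1 hs)⟩

theorem exists_pos_prod_map_sq_sub_one_eq_neg_one_pow_mul (hs : s.map conj = s)
    (hcirc : ∀ z ∈ s, ‖z‖ ≠ 1) :
    ∃ c : ℝ, 0 < c ∧
      (s.map fun z => z ^ 2 - 1).prod = (-1) ^ card (s.filter (‖·‖ < 1)) * (c : ℂ) := by
  induction hn : card s using Nat.strong_induction_on generalizing s with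
  | _ n ih =>
  rcases empty_or_exists_mem s with rfl | ⟨z, hz⟩
  · exact ⟨1, one_pos, by simp⟩
  by_cases hzr : conj z = z
  · obtain ⟨t, rfl, ht⟩ := exists_eq_cons_of_map_conj_eq hs hz hzr
    obtain ⟨c, hc, hprod⟩ := ih (card t) (by simp [← hn]) ht
      (fun w hw => hcirc w (mem_cons_of_mem hw)) rfl
    obtain ⟨x, rfl⟩ := Complex.conj_eq_iff_real.1 hzr
    have hx : |x| ≠ 1 := by simpa using hcirc x (mem_cons_self _ _)
    have hx2 : x ^ 2 - 1 ≠ 0 := by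
      rw [sub_ne_zero, ← sq_abs, Ne, pow_eq_one_iff_of_nonneg (abs_nonneg x) two_ne_zero]
      exact hx
    refine ⟨|x ^ 2 - 1| * c, by positivity, ?_⟩
    rw [map_cons, prod_cons, hprod]
    by_cases hin : |x| < 1
    · rw [filter_cons_of_pos _ (by simpa using hin), abs_of_neg (by simpa using hin),
        card_cons, pow_succ]
      push_cast
      ring
    · rw [filter_cons_of_neg _ (by simpa using hin),
        abs_of_pos (by simpa using lt_of_le_of_ne (not_lt.1 hin) hx.symm)]
      push_cast
      ring
  · obtain ⟨t, rfl, ht⟩ := exists_eq_cons_cons_conj_of_map_conj_eq hs hz hzr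
    obtain ⟨c, hc, hprod⟩ := ih (card t) (by simp [← hn]) ht
      (fun w hw => hcirc w (mem_cons_of_mem (mem_cons_of_mem hw))) rfl
    have hz1 : z ^ 2 - 1 ≠ 0 := by
      intro h
      rcases sq_eq_one_iff.1 (sub_eq_zero.1 h) with rfl | rfl <;> simp at hzr
    have hpair : (z ^ 2 - 1) * (conj z ^ 2 - 1) = Complex.normSq (z ^ 2 - 1) := by
      rw [Complex.normSq_eq_conj_mul_self]
      simp only [map_sub, map_pow, map_one]
      ring
    refine ⟨Complex.normSq (z ^ 2 - 1) * c, mul_pos (Complex.normSq_pos.2 hz1) hc, ?_⟩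
    rw [map_cons, map_cons, prod_cons, prod_cons, hprod, ← mul_assoc, hpair]
    by_cases hin : ‖z‖ < 1
    · rw [filter_cons_of_pos _ (by exact hin), filter_cons_of_pos _ (by rwa [Complex.norm_conj]),
        card_cons, card_cons]
      push_cast
      ring
    · rw [filter_cons_of_neg _ (by exact hin), filter_cons_of_neg _ (by rwa [Complex.norm_conj])]
      push_cast
      ring

end Multiset

namespace Polynomial

theorem Splits.eval_one_mul_eval_neg_one {R : Type*} [CommRing R] [IsDomain R]
    {f : R[X]} (hf : f.Splits) :
    f.eval 1 * f.eval (-1) = f.leadingCoeff ^ 2 * (f.roots.map fun z => z ^ 2 - 1).prod := by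
  rw [hf.eval_eq_prod_roots, hf.eval_eq_prod_roots, mul_mul_mul_comm, ← Multiset.prod_map_mul,
    sq]
  congr 2
  exact Multiset.map_congr rfl fun z _ => by ring

theorem map_conj_aroots (q : ℝ[X]) : (q.aroots ℂ).map conj = q.aroots ℂ := by
  rw [aroots_def, ← (IsAlgClosed.splits _).roots_map, map_map]
  congr 2
  ext x
  simp

theorem even_card_aroots_norm_lt_one_iff {q : ℝ[X]} (hq : q ≠ 0)
    (hcirc : ∀ z ∈ q.aroots ℂ, ‖z‖ ≠ 1) :
    Even (Multiset.card ((q.aroots ℂ).filter (‖·‖ < 1))) ↔ 0 < q.eval 1 * q.eval (-1) := by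
  obtain ⟨c, hc, hprod⟩ :=
    Multiset.exists_pos_prod_map_sq_sub_one_eq_neg_one_pow_mul q.map_conj_aroots hcirc
  have heval : q.eval 1 * q.eval (-1) =
      q.leadingCoeff ^ 2 * ((-1) ^ Multiset.card ((q.aroots ℂ).filter (‖·‖ < 1)) * c) := by
    have h := (IsAlgClosed.splits (q.map (algebraMap ℝ ℂ))).eval_one_mul_eval_neg_one
    rw [← aroots_def, hprod, leadingCoeff_map, ← map_one (algebraMap ℝ ℂ),
      ← map_neg (algebraMap ℝ ℂ), eval_map_apply, eval_map_apply, Complex.coe_algebraMap] at h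
    exact_mod_cast h
  have hlc : 0 < q.leadingCoeff ^ 2 * c := by
    have := leadingCoeff_ne_zero.2 hq
    positivity
  rw [heval, mul_left_comm, mul_pos_iff_of_pos_right hlc]
  rcases Nat.even_or_odd (Multiset.card ((q.aroots ℂ).filter (‖·‖ < 1))) with h | h
  · simp [h, h.neg_one_pow]
  · simp [h.neg_one_pow, Nat.not_even_iff_odd.2 h]

end Polynomial

/-- **The `|γ| = 1` row of Table S1.** For positive hoppings `w₋₂, w₋₁, w₀, w₁`,
if the cubic `p(X) = w₋₂ X³ + w₋₁ X² + w₀ X + w₁` has no root on the unit circle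
and `w₀ + w₋₂ < w₋₁ + w₁`, then the number of roots of `p` (with multiplicity)
in the open unit disk is `0` or `2`. -/
theorem winding_one_root_count
    (wm2 wm1 w0 w1 : ℝ)
    (hm2 : 0 < wm2) (hm1 : 0 < wm1) (h0 : 0 < w0) (h1 : 0 < w1)
    (p : Polynomial ℂ)
    (hp : p = C (wm2 : ℂ) * X ^ 3 + C (wm1 : ℂ) * X ^ 2 + C (w0 : ℂ) * X + C (w1 : ℂ))
    (hcirc : ∀ ζ : ℂ, p.IsRoot ζ → ‖ζ‖ ≠ 1)
    (hC2 : w0 + wm2 < wm1 + w1) :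
    Multiset.card (p.roots.filter fun ζ => ‖ζ‖ < 1) = 0 ∨
    Multiset.card (p.roots.filter fun ζ => ‖ζ‖ < 1) = 2 := by
  set q : ℝ[X] := C wm2 * X ^ 3 + C wm1 * X ^ 2 + C w0 * X + C w1
  have hpq : p = q.map (algebraMap ℝ ℂ) := by simp [hp, q]
  have hq1 : q.eval 1 = wm2 + wm1 + w0 + w1 := by simp [q]
  have hqm1 : q.eval (-1) = wm1 + w1 - w0 - wm2 := by
    simp only [q, eval_add, eval_mul, eval_C, eval_pow, eval_X]
    ring
  have hpos : 0 < q.eval 1 * q.eval (-1) := by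
    rw [hq1, hqm1]
    exact mul_pos (by positivity) (by linarith)
  have hq : q ≠ 0 := fun h => by simp [h] at hpos
  have heven := (even_card_aroots_norm_lt_one_iff hq
    fun z hz => hcirc z (isRoot_of_mem_roots (hpq ▸ hz))).2 hpos
  rw [aroots_def, ← hpq] at heven
  have hdeg : p.natDegree ≤ 3 := by rw [hp]; compute_degree
  have hle := (Multiset.card_le_card (Multiset.filter_le (fun ζ : ℂ => ‖ζ‖ < 1) p.roots)).trans
    ((card_roots' p).trans hdeg)
  obtain ⟨k, hk⟩ := heven
  omega
end

section
/- Let w₋₂, w₋₁, w₀, w₁ be strictly positive real numbers and set x = w₋₁/w₀, y = w₁/w₀, z = w₋₂/w₀. Let p be the complex cubic polynomial p(X) = w₋₂·X³ + w₋₁·X² + w₀·X + w₁, and assume p has no root of modulus exactly 1. Write C₂ = 1 − x − y + z, C₃ = z − z² − x·y + y², C₄ = |y − x| − 2z. If either (C₃ > 0 and C₂ > 0) or (C₃ < 0 and C₂ > 0 and C₄ > 0), then exactly one root of p (counted with multiplicity) lies in the open unit disk {ζ ∈ ℂ : |ζ| < 1}. -/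
/-!
Normalising by `w₀`, the cubic `f(t) = z t³ + x t² + t + y` has `f(-1) = -C₂ < 0 < f(0)`, hence a
root `r ∈ (-1, 0)`, and `f = z (X - r)(X² + B X + G)` with `B, G` real. The quadratic factor is
positive at `±1`, so if one of its roots lay in the open unit disk, both would (real roots: by
the signs at `±1`; a conjugate pair: equal moduli), whence `|G| < 1`. Then
`C₃ = -z² (1 - G)(1 + B r + G r²)`, which is `-z² ∏ (1 - uᵢuⱼ)` over the pairs of roots of `f`,
would be negative, and `|y - x| = z |r (1 - G) - B|` would be less than `2 z`.
-/

open Polynomial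

lemma abs_lt_one_of_quadratic_root_norm_lt_one {B G : ℝ} {ζ : ℂ}
    (hζ : ζ ^ 2 + B * ζ + G = 0) (hζ1 : ‖ζ‖ < 1)
    (hq1 : 0 < 1 + B + G) (hqm1 : 0 < 1 - B + G) : |G| < 1 := by
  have hre : ζ.re ^ 2 - ζ.im ^ 2 + B * ζ.re + G = 0 := by
    simpa [pow_two] using congrArg Complex.re hζ
  have him : ζ.im * (2 * ζ.re + B) = 0 := by
    have := congrArg Complex.im hζ
    simp only [pow_two, Complex.add_im, Complex.mul_im, Complex.ofReal_re, Complex.ofReal_im,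
      Complex.zero_im] at this
    linear_combination this
  have hnorm : ζ.re ^ 2 + ζ.im ^ 2 < 1 := by
    rw [← Complex.sq_norm_sub_sq_re] at *
    nlinarith [norm_nonneg ζ]
  rw [abs_lt]
  rcases mul_eq_zero.1 him with hreal | hB
  · -- real roots `s` and `t = -B - s`, with `1 ± B + G = (1 ± s)(1 ± t)`
    set s := ζ.re
    have hs : -1 < s ∧ s < 1 := by constructor <;> nlinarith
    have hG : G = s * (-B - s) := by linear_combination hre + ζ.im * hreal
    have ht : -1 < -B - s ∧ -B - s < 1 := by constructor <;> nlinarith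
    constructor <;> nlinarith
  · have hG : G = ζ.re ^ 2 + ζ.im ^ 2 := by linear_combination hre - ζ.re * hB
    constructor <;> nlinarith

lemma one_add_mul_add_mul_sq_pos {r B G : ℝ} (hr : |r| < 1) (hG : |G| < 1)
    (hq1 : 0 < 1 + B + G) (hqm1 : 0 < 1 - B + G) : 0 < 1 + B * r + G * r ^ 2 := by
  rw [abs_lt] at hr hG
  rcases le_total 0 r with h | h
  · -- `1 + B r + G r² = (1 - r)(1 - G r) + r (1 + B + G)`
    have : 0 < 1 - G * r := by nlinarith
    nlinarith [mul_pos (sub_pos.2 hr.2) this]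
  · -- `1 + B r + G r² = (1 + r)(1 + G r) - r (1 - B + G)`
    have : 0 < 1 + G * r := by nlinarith
    nlinarith [mul_pos (neg_lt_iff_pos_add'.1 hr.1) this]

lemma abs_mul_one_sub_sub_lt_two {r B G : ℝ} (hr : |r| < 1) (hG : G < 1)
    (hq1 : 0 < 1 + B + G) (hqm1 : 0 < 1 - B + G) : |r * (1 - G) - B| < 2 := by
  rw [abs_lt] at hr ⊢
  constructor <;> nlinarith [mul_pos (sub_pos.2 hr.2) (sub_pos.2 hG),
    mul_pos (neg_lt_iff_pos_add.1 hr.1) (sub_pos.2 hG)]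

lemma one_le_norm_of_quadratic_root {r B G : ℝ} (hr : |r| < 1)
    (hq1 : 0 < 1 + B + G) (hqm1 : 0 < 1 - B + G)
    (hC : (1 - G) * (1 + B * r + G * r ^ 2) < 0 ∨ 2 < |r * (1 - G) - B|)
    {ζ : ℂ} (hζ : ζ ^ 2 + B * ζ + G = 0) : 1 ≤ ‖ζ‖ := by
  by_contra! hζ1
  have hG := abs_lt_one_of_quadratic_root_norm_lt_one hζ hζ1 hq1 hqm1
  rcases hC with hC | hC
  · have := one_add_mul_add_mul_sq_pos hr hG hq1 hqm1
    nlinarith [(abs_lt.1 hG).2]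
  · exact (abs_mul_one_sub_sub_lt_two hr (abs_lt.1 hG).2 hq1 hqm1).not_gt hC

lemma card_roots_filter_norm_lt_one_of_quadratic_factor {a : ℂ} {r B G : ℝ} (ha : a ≠ 0)
    (hr : |r| < 1) (hq : ∀ ζ : ℂ, ζ ^ 2 + B * ζ + G = 0 → 1 ≤ ‖ζ‖) :
    Multiset.card ((C a * ((X - C (r : ℂ)) * (X ^ 2 + C (B : ℂ) * X + C (G : ℂ)))).roots.filter
      fun ζ => ‖ζ‖ < 1) = 1 := by
  have hq0 : X ^ 2 + C (B : ℂ) * X + C (G : ℂ) ≠ 0 :=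
    (by monicity! : Monic (X ^ 2 + C (B : ℂ) * X + C (G : ℂ))).ne_zero
  have hrnorm : ‖(r : ℂ)‖ < 1 := by rwa [Complex.norm_real, Real.norm_eq_abs]
  have hout : ∀ ζ ∈ (X ^ 2 + C (B : ℂ) * X + C (G : ℂ)).roots, ¬ ‖ζ‖ < 1 := fun ζ hζ =>
    not_lt.2 (hq ζ (by simpa [IsRoot] using (mem_roots'.1 hζ).2))
  rw [roots_C_mul _ ha, roots_mul (mul_ne_zero (X_sub_C_ne_zero _) hq0), roots_X_sub_C,
    Multiset.filter_add, Multiset.filter_singleton, if_pos hrnorm, Multiset.filter_eq_nil.2 hout]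
  rfl

theorem card_roots_filter_norm_lt_one_eq_one {x y z : ℝ} (hx : 0 < x) (hy : 0 < y) (hz : 0 < z)
    (hC₂ : 0 < 1 - x - y + z) (hC : 0 < z - z ^ 2 - x * y + y ^ 2 ∨ 0 < |y - x| - 2 * z) :
    Multiset.card ((C (z : ℂ) * X ^ 3 + C (x : ℂ) * X ^ 2 + X + C (y : ℂ)).roots.filter
      fun ζ => ‖ζ‖ < 1) = 1 := by
  obtain ⟨r, ⟨hr1, hr0⟩, hfr⟩ :
      ∃ r ∈ Set.Ioo (-1 : ℝ) 0, z * r ^ 3 + x * r ^ 2 + r + y = 0 := by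
    have hcont : ContinuousOn (fun t : ℝ => z * t ^ 3 + x * t ^ 2 + t + y) (Set.Icc (-1) 0) := by
      fun_prop
    exact intermediate_value_Ioo (by norm_num) hcont ⟨by norm_num; linarith, by norm_num; linarith⟩
  obtain ⟨B, G, hxB, h1G, hyG⟩ :
      ∃ B G : ℝ, x = z * (B - r) ∧ 1 = z * (G - r * B) ∧ y = -(z * r * G) :=
    ⟨x / z + r, 1 / z + r * (x / z + r), by field_simp; ring, by field_simp; ring,
      by field_simp; linear_combination hfr⟩
  have hq1 : 0 < 1 + B + G := by
    have : 1 + x + y + z = z * (1 - r) * (1 + B + G) := by linear_combination hxB + h1G + hyG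
    nlinarith [mul_pos hz (sub_pos.2 (hr0.trans one_pos))]
  have hqm1 : 0 < 1 - B + G := by
    have : 1 - x - y + z = z * (1 + r) * (1 - B + G) := by linear_combination -hxB + h1G - hyG
    nlinarith [mul_pos hz (neg_lt_iff_pos_add'.1 hr1)]
  have hr : |r| < 1 := abs_lt.2 ⟨hr1, hr0.trans one_pos⟩
  have hC' : (1 - G) * (1 + B * r + G * r ^ 2) < 0 ∨ 2 < |r * (1 - G) - B| := by
    have hC₃ : z - z ^ 2 - x * y + y ^ 2 = -(z ^ 2 * ((1 - G) * (1 + B * r + G * r ^ 2))) := by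
      rw [hxB, hyG]; linear_combination z * h1G
    have hC₄ : y - x = z * (r * (1 - G) - B) := by rw [hxB, hyG]; ring
    rw [hC₃, hC₄, abs_mul, abs_of_pos hz] at hC
    refine hC.imp (fun h => ?_) (fun h => ?_) <;> nlinarith [pow_pos hz 2]
  have hfac : C (z : ℂ) * X ^ 3 + C (x : ℂ) * X ^ 2 + X + C (y : ℂ) =
      C (z : ℂ) * ((X - C (r : ℂ)) * (X ^ 2 + C (B : ℂ) * X + C (G : ℂ))) := by
    have hxB' : (x : ℂ) = z * (B - r) := by exact_mod_cast hxB
    have h1G' : (1 : ℂ) = z * (G - r * B) := by exact_mod_cast h1G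
    have hyG' : (y : ℂ) = -(z * r * G) := by exact_mod_cast hyG
    refine Polynomial.funext fun ζ => ?_
    simp only [eval_add, eval_mul, eval_sub, eval_pow, eval_C, eval_X]
    linear_combination ζ ^ 2 * hxB' + ζ * h1G' + hyG'
  exact hfac ▸ card_roots_filter_norm_lt_one_of_quadratic_factor (by exact_mod_cast hz.ne') hr
    fun _ hζ => one_le_norm_of_quadratic_root hr hq1 hqm1 hC' hζ

theorem winding_zero_root_count_general
    (wm2 wm1 w0 w1 : ℝ)
    (hm2 : 0 < wm2) (hm1 : 0 < wm1) (h0 : 0 < w0) (h1 : 0 < w1)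
    (x y z : ℝ) (hx : x = wm1 / w0) (hy : y = w1 / w0) (hz : z = wm2 / w0)
    (p : Polynomial ℂ)
    (hp : p = C (wm2 : ℂ) * X ^ 3 + C (wm1 : ℂ) * X ^ 2 + C (w0 : ℂ) * X + C (w1 : ℂ))
    (hcond : (z - z ^ 2 - x * y + y ^ 2 > 0 ∧ 1 - x - y + z > 0) ∨
      (z - z ^ 2 - x * y + y ^ 2 < 0 ∧ 1 - x - y + z > 0 ∧ |y - x| - 2 * z > 0)) :
    Multiset.card (p.roots.filter fun ζ => ‖ζ‖ < 1) = 1 := by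
  have hw0 : (w0 : ℂ) ≠ 0 := by exact_mod_cast h0.ne'
  have hp' : p = C (w0 : ℂ) * (C (z : ℂ) * X ^ 3 + C (x : ℂ) * X ^ 2 + X + C (y : ℂ)) := by
    simp only [hp, mul_add, ← mul_assoc, ← C_mul, hx, hy, hz, Complex.ofReal_div,
      mul_div_cancel₀ _ hw0]
  rw [hp', roots_C_mul _ hw0]
  subst hx hy hz
  exact card_roots_filter_norm_lt_one_eq_one (by positivity) (by positivity) (by positivity)
    (hcond.elim (·.2) (·.2.1)) (hcond.imp (·.1) (·.2.2))

/-- **The `|γ| = 0` row of Table S1.** For positive hoppings `w₋₂, w₋₁, w₀, w₁`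
with `x = w₋₁/w₀`, `y = w₁/w₀`, `z = w₋₂/w₀`, if the cubic
`p(X) = w₋₂ X³ + w₋₁ X² + w₀ X + w₁` has no root on the unit circle and either
(`C₃ > 0` and `C₂ > 0`) or (`C₃ < 0`, `C₂ > 0` and `C₄ > 0`), where
`C₂ = 1 - x - y + z`, `C₃ = z - z² - x y + y²`, `C₄ = |y - x| - 2z`, then exactly
one root of `p` (with multiplicity) lies in the open unit disk. -/
theorem winding_zero_root_count
    (wm2 wm1 w0 w1 : ℝ)
    (hm2 : 0 < wm2) (hm1 : 0 < wm1) (h0 : 0 < w0) (h1 : 0 < w1)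
    (x y z : ℝ) (hx : x = wm1 / w0) (hy : y = w1 / w0) (hz : z = wm2 / w0)
    (p : Polynomial ℂ)
    (hp : p = C (wm2 : ℂ) * X ^ 3 + C (wm1 : ℂ) * X ^ 2 + C (w0 : ℂ) * X + C (w1 : ℂ))
    (hcirc : ∀ ζ : ℂ, p.IsRoot ζ → ‖ζ‖ ≠ 1)
    (hcond : (z - z ^ 2 - x * y + y ^ 2 > 0 ∧ 1 - x - y + z > 0) ∨
      (z - z ^ 2 - x * y + y ^ 2 < 0 ∧ 1 - x - y + z > 0 ∧ |y - x| - 2 * z > 0)) :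
    Multiset.card (p.roots.filter fun ζ => ‖ζ‖ < 1) = 1 :=
  winding_zero_root_count_general wm2 wm1 w0 w1 hm2 hm1 h0 h1 x y z hx hy hz p hp hcond
end
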